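/- Let f : (X,x) → (Y,y) be a bi-Lipschitz homeomorphism between subanalytic germs (with respect to the inner metric). Then for every loop γ : S¹ → X ∖ {x} and every α > 0, γ is an α-fast loop in X if and only if f ∘ γ is an α-fast loop in Y. Consequently υ(X,x) = υ(Y,y). -/

import Mathlib

open Set Filter MeasureTheory
open scoped Topology

/-- A loop in `X ∖ {x}`. -/
def IsLoopIn {n : ℕ} (X : Set (EuclideanSpace ℝ (Fin n))) (x : EuclideanSpace ℝ (Fin n))
    (γ : Circle → EuclideanSpace ℝ (Fin n)) : Prop :=
  Continuous γ ∧ ∀ θ, γ θ ∈ X \ {x}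

/-- A loop `γ : S¹ → X ∖ {x}` is `α`-fast if it can be filled by a homotopy `H` from the
constant loop at `x`, staying in `X`, whose image has `r^{−a} 𝓗²(Im(H) ∩ B(x,r)) → 0`
for every `0 < a < α`. -/
def IsFastLoop {n : ℕ} (X : Set (EuclideanSpace ℝ (Fin n))) (x : EuclideanSpace ℝ (Fin n))
    (α : ℝ) (γ : Circle → EuclideanSpace ℝ (Fin n)) : Prop :=
  ∃ H : Circle → ℝ → EuclideanSpace ℝ (Fin n),
    ContinuousOn (Function.uncurry H) (univ ×ˢ Icc 0 1) ∧
    (∀ θ, ∀ s ∈ Icc (0:ℝ) 1, H θ s ∈ X) ∧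
    (∀ θ, H θ 0 = x) ∧ (∀ θ, H θ 1 = γ θ) ∧
    ∀ a : ℝ, 0 < a → a < α →
      Tendsto (fun r : ℝ =>
          μH[2] ({p | ∃ θ, ∃ s ∈ Icc (0:ℝ) 1, p = H θ s} ∩ Metric.closedBall x r) /
            ENNReal.ofReal (r ^ a))
        (𝓝[>] 0) (𝓝 0)

/-- `γ` is null-homotopic inside `X ∖ {x}`. -/
def IsNullHomotopicIn {n : ℕ} (X : Set (EuclideanSpace ℝ (Fin n)))
    (x : EuclideanSpace ℝ (Fin n)) (γ : Circle → EuclideanSpace ℝ (Fin n)) : Prop :=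
  ∃ H : Circle → ℝ → EuclideanSpace ℝ (Fin n),
    ContinuousOn (Function.uncurry H) (univ ×ˢ Icc 0 1) ∧
    (∀ θ, ∀ s ∈ Icc (0:ℝ) 1, H θ s ∈ X \ {x}) ∧
    (∃ c, ∀ θ, H θ 0 = c) ∧ (∀ θ, H θ 1 = γ θ)

/-- `c` is distinguished for `(X,x)`: every `α`-fast loop with `α > c` is null-homotopic
in `X ∖ {x}`. -/
def Distinguished {n : ℕ} (X : Set (EuclideanSpace ℝ (Fin n)))
    (x : EuclideanSpace ℝ (Fin n)) (c : ℝ) : Prop :=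
  0 < c ∧ ∀ α : ℝ, c < α → ∀ γ, IsLoopIn X x γ → IsFastLoop X x α γ →
    IsNullHomotopicIn X x γ

/-- The invariant `υ(X,x)`: the infimum of distinguished constants. -/
noncomputable def upsilon {n : ℕ} (X : Set (EuclideanSpace ℝ (Fin n)))
    (x : EuclideanSpace ℝ (Fin n)) : ℝ :=
  sInf {c | Distinguished X x c}

/-!
If `f` is bi-Lipschitz with constant `K` and `H` fills the loop `γ` at `x`, then `f ∘ H` fills
`f ∘ γ` at `f x`, and the part of its image in `B(f x, r)` is the `f`-image of the part of `Im H`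
in `B(x, K r)`. So its `𝓗²`-measure is at most `K² 𝓗²(Im H ∩ B(x, K r))`, and because
`(K r)^a = K^a r^a` the decay condition defining `α`-fast loops survives. Applying this to `f` and
to its inverse, and transporting null-homotopies in the punctured sets the same way, the two
sets of distinguished numbers coincide.
-/

open Metric
open scoped NNReal ENNReal

theorem tendsto_div_rpow_nhdsGT_zero_of_le_mul_comp_mul {μ ν : ℝ → ℝ≥0∞} {C : ℝ≥0∞}
    {L a : ℝ} (hC : C ≠ ∞) (hL : 0 < L) (hle : ∀ r > 0, ν r ≤ C * μ (L * r))
    (hμ : Tendsto (fun r ↦ μ r / ENNReal.ofReal (r ^ a)) (𝓝[>] 0) (𝓝 0)) :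
    Tendsto (fun r ↦ ν r / ENNReal.ofReal (r ^ a)) (𝓝[>] 0) (𝓝 0) := by
  set b := ENNReal.ofReal (L ^ a)
  have hb₀ : b ≠ 0 := by simpa [b] using Real.rpow_pos_of_pos hL a
  have hscale : Tendsto (L * ·) (𝓝[>] (0 : ℝ)) (𝓝[>] 0) :=
    tendsto_iff_comap.2 (comap_mulLeft_nhdsGT_zero hL).ge
  have hlim : Tendsto (fun r ↦ C * b * (μ (L * r) / ENNReal.ofReal ((L * r) ^ a)))
      (𝓝[>] 0) (𝓝 0) := by
    simpa using ENNReal.Tendsto.const_mul (hμ.comp hscale)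
      (Or.inr (ENNReal.mul_ne_top hC ENNReal.ofReal_ne_top))
  refine tendsto_of_tendsto_of_tendsto_of_le_of_le' tendsto_const_nhds hlim
    (Eventually.of_forall fun _ ↦ zero_le) ?_
  filter_upwards [self_mem_nhdsWithin] with r (hr : 0 < r)
  calc ν r / ENNReal.ofReal (r ^ a) ≤ C * μ (L * r) / ENNReal.ofReal (r ^ a) :=
        ENNReal.div_le_div_right (hle r hr) _
    _ = C * b * (μ (L * r) / ENNReal.ofReal ((L * r) ^ a)) := by
        rw [Real.mul_rpow hL.le hr.le, ENNReal.ofReal_mul (Real.rpow_nonneg hL.le a), mul_assoc,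
          ← mul_div_assoc, ENNReal.mul_div_mul_left _ _ hb₀ ENNReal.ofReal_ne_top, mul_div_assoc]

structure BiLipschitzInvOn {α β : Type*} [PseudoEMetricSpace α] [PseudoEMetricSpace β]
    (f : α → β) (g : β → α) (X : Set α) (Y : Set β) (K : ℝ≥0) : Prop where
  mapsTo : MapsTo f X Y
  mapsTo_inv : MapsTo g Y X
  invOn : InvOn g f X Y
  lipschitzOnWith : LipschitzOnWith K f X
  lipschitzOnWith_inv : LipschitzOnWith K g Y

namespace BiLipschitzInvOn

section PseudoMetricSpace

variable {α β : Type*} [PseudoMetricSpace α] [PseudoMetricSpace β] {f : α → β} {g : β → α}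
  {X : Set α} {Y : Set β} {K : ℝ≥0}

theorem of_bijOn (hbij : BijOn f X Y) (hg : InvOn g f X Y)
    (hf : ∀ a ∈ X, ∀ b ∈ X, dist (f a) (f b) ≤ K * dist a b)
    (hf' : ∀ a ∈ X, ∀ b ∈ X, dist a b ≤ K * dist (f a) (f b)) :
    BiLipschitzInvOn f g X Y K where
  mapsTo := hbij.mapsTo
  mapsTo_inv := (hbij.symm hg.symm).mapsTo
  invOn := hg
  lipschitzOnWith := .of_dist_le_mul hf
  lipschitzOnWith_inv := .of_dist_le_mul <| by
    rw [← hbij.image_eq]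
    simp only [forall_mem_image]
    intro a ha b hb
    rw [hg.1 ha, hg.1 hb]
    exact hf' a ha b hb

theorem symm (h : BiLipschitzInvOn f g X Y K) : BiLipschitzInvOn g f Y X K :=
  ⟨h.mapsTo_inv, h.mapsTo, h.invOn.symm, h.lipschitzOnWith_inv, h.lipschitzOnWith⟩

variable (h : BiLipschitzInvOn f g X Y K)
include h

theorem dist_le_mul_dist_image {a b : α} (ha : a ∈ X) (hb : b ∈ X) :
    dist a b ≤ K * dist (f a) (f b) := by
  simpa only [h.invOn.1 ha, h.invOn.1 hb] using
    h.lipschitzOnWith_inv.dist_le_mul _ (h.mapsTo ha) _ (h.mapsTo hb)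

theorem mapsTo_diff_singleton {x : α} (hx : x ∈ X) : MapsTo f (X \ {x}) (Y \ {f x}) :=
  fun _ hp ↦ ⟨h.mapsTo hp.1, (h.invOn.1.injOn.ne_iff hp.1 hx).2 hp.2⟩

theorem image_inter_closedBall_subset {S : Set α} (hS : S ⊆ X) {x : α} (hx : x ∈ X) (r : ℝ) :
    f '' S ∩ closedBall (f x) r ⊆ f '' (S ∩ closedBall x (K * r)) := by
  rintro _ ⟨⟨p, hp, rfl⟩, hpr⟩
  refine ⟨p, ⟨hp, ?_⟩, rfl⟩
  calc dist p x ≤ K * dist (f p) (f x) := h.dist_le_mul_dist_image (hS hp) hx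
    _ ≤ K * r := mul_le_mul_of_nonneg_left hpr K.2

end PseudoMetricSpace

theorem hausdorffMeasure_image_inter_closedBall_le {α β : Type*} [MetricSpace α]
    [MeasurableSpace α] [BorelSpace α] [MetricSpace β] [MeasurableSpace β] [BorelSpace β]
    {f : α → β} {g : β → α} {X : Set α} {Y : Set β} {K : ℝ≥0} (h : BiLipschitzInvOn f g X Y K)
    {S : Set α} (hS : S ⊆ X) {x : α} (hx : x ∈ X) {d : ℝ} (hd : 0 ≤ d) (r : ℝ) :
    μH[d] (f '' S ∩ closedBall (f x) r) ≤ (K : ℝ≥0∞) ^ d * μH[d] (S ∩ closedBall x (K * r)) :=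
  (measure_mono (h.image_inter_closedBall_subset hS hx r)).trans <|
    (h.lipschitzOnWith.mono fun _ hp ↦ hS hp.1).hausdorffMeasure_image_le hd

section EuclideanSpace

variable {n m : ℕ} {X : Set (EuclideanSpace ℝ (Fin n))} {Y : Set (EuclideanSpace ℝ (Fin m))}
  {f : EuclideanSpace ℝ (Fin n) → EuclideanSpace ℝ (Fin m)}
  {g : EuclideanSpace ℝ (Fin m) → EuclideanSpace ℝ (Fin n)} {K : ℝ≥0}
  {x : EuclideanSpace ℝ (Fin n)} {γ : Circle → EuclideanSpace ℝ (Fin n)}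

theorem isFastLoop_comp (h : BiLipschitzInvOn f g X Y K) (hK : 0 < K) {α : ℝ}
    (hγ : IsFastLoop X x α γ) : IsFastLoop Y (f x) α (f ∘ γ) := by
  obtain ⟨H, hcont, hmem, h0, h1, hdecay⟩ := hγ
  have hx : x ∈ X := h0 1 ▸ hmem 1 0 (left_mem_Icc.2 zero_le_one)
  set S := {p | ∃ θ, ∃ s ∈ Icc (0:ℝ) 1, p = H θ s}
  have hSX : S ⊆ X := by
    rintro _ ⟨θ, s, hs, rfl⟩
    exact hmem θ s hs
  have himage : {p | ∃ θ, ∃ s ∈ Icc (0:ℝ) 1, p = f (H θ s)} = f '' S := by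
    ext
    simp only [S, mem_ofPred_eq, mem_image]
    grind
  refine ⟨fun θ s ↦ f (H θ s),
    h.lipschitzOnWith.continuousOn.comp hcont fun p hp ↦ hmem p.1 p.2 hp.2,
    fun θ s hs ↦ h.mapsTo (hmem θ s hs), fun θ ↦ congrArg f (h0 θ), fun θ ↦ congrArg f (h1 θ),
    fun a ha haα ↦ ?_⟩
  rw [himage]
  exact tendsto_div_rpow_nhdsGT_zero_of_le_mul_comp_mul (by simp) (NNReal.coe_pos.2 hK)
    (fun r _ ↦ h.hausdorffMeasure_image_inter_closedBall_le hSX hx zero_le_two r)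
    (hdecay a ha haα)

theorem isLoopIn_comp (h : BiLipschitzInvOn f g X Y K) (hx : x ∈ X) (hγ : IsLoopIn X x γ) :
    IsLoopIn Y (f x) (f ∘ γ) :=
  ⟨h.lipschitzOnWith.continuousOn.comp_continuous hγ.1 fun θ ↦ (hγ.2 θ).1,
    fun θ ↦ h.mapsTo_diff_singleton hx (hγ.2 θ)⟩

theorem isNullHomotopicIn_comp (h : BiLipschitzInvOn f g X Y K) (hx : x ∈ X)
    (hγ : IsNullHomotopicIn X x γ) : IsNullHomotopicIn Y (f x) (f ∘ γ) := by
  obtain ⟨H, hcont, hmem, ⟨c, hc⟩, h1⟩ := hγ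
  exact ⟨fun θ s ↦ f (H θ s),
    h.lipschitzOnWith.continuousOn.comp hcont fun p hp ↦ (hmem p.1 p.2 hp.2).1,
    fun θ s hs ↦ h.mapsTo_diff_singleton hx (hmem θ s hs), ⟨f c, fun θ ↦ congrArg f (hc θ)⟩,
    fun θ ↦ congrArg f (h1 θ)⟩

theorem inv_comp_comp (h : BiLipschitzInvOn f g X Y K) (hγ : IsLoopIn X x γ) :
    g ∘ f ∘ γ = γ :=
  funext fun θ ↦ h.invOn.1 (hγ.2 θ).1

theorem isFastLoop_comp_iff (h : BiLipschitzInvOn f g X Y K) (hK : 0 < K) (hx : x ∈ X) {α : ℝ}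
    (hγ : IsLoopIn X x γ) : IsFastLoop X x α γ ↔ IsFastLoop Y (f x) α (f ∘ γ) := by
  refine ⟨h.isFastLoop_comp hK, fun hfγ ↦ ?_⟩
  simpa only [h.inv_comp_comp hγ, h.invOn.1 hx] using h.symm.isFastLoop_comp hK hfγ

theorem distinguished_of_distinguished_apply (h : BiLipschitzInvOn f g X Y K) (hK : 0 < K)
    (hx : x ∈ X) {c : ℝ} (hc : Distinguished Y (f x) c) : Distinguished X x c := by
  refine ⟨hc.1, fun α hα γ hγ hfast ↦ ?_⟩
  have hnull := hc.2 α hα (f ∘ γ) (h.isLoopIn_comp hx hγ) (h.isFastLoop_comp hK hfast)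
  simpa only [h.inv_comp_comp hγ, h.invOn.1 hx] using
    h.symm.isNullHomotopicIn_comp (h.mapsTo hx) hnull

theorem distinguished_iff (h : BiLipschitzInvOn f g X Y K) (hK : 0 < K) (hx : x ∈ X) (c : ℝ) :
    Distinguished X x c ↔ Distinguished Y (f x) c := by
  refine ⟨fun hc ↦ ?_, h.distinguished_of_distinguished_apply hK hx⟩
  rw [← h.invOn.1 hx] at hc
  exact h.symm.distinguished_of_distinguished_apply hK (h.mapsTo hx) hc

theorem upsilon_eq (h : BiLipschitzInvOn f g X Y K) (hK : 0 < K) (hx : x ∈ X) :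
    upsilon X x = upsilon Y (f x) := by
  simp only [upsilon, h.distinguished_iff hK hx]

end EuclideanSpace

end BiLipschitzInvOn

theorem upsilon_biLipschitz_invariant_general {n m : ℕ}
    (X : Set (EuclideanSpace ℝ (Fin n))) (Y : Set (EuclideanSpace ℝ (Fin m)))
    (f : EuclideanSpace ℝ (Fin n) → EuclideanSpace ℝ (Fin m))
    (hbij : Set.BijOn f X Y)
    (g : EuclideanSpace ℝ (Fin m) → EuclideanSpace ℝ (Fin n))
    (hg : Set.InvOn g f X Y)
    (L : ℝ) (hL : 0 < L)
    (hfLip : ∀ a ∈ X, ∀ b ∈ X, dist (f a) (f b) ≤ L * dist a b)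
    (hfinvLip : ∀ a ∈ X, ∀ b ∈ X, dist a b ≤ L * dist (f a) (f b))
    (x : EuclideanSpace ℝ (Fin n)) (y : EuclideanSpace ℝ (Fin m))
    (hx : x ∈ X) (hfx : f x = y) :
    (∀ α > (0:ℝ), ∀ γ, IsLoopIn X x γ →
      (IsFastLoop X x α γ ↔ IsFastLoop Y y α (f ∘ γ))) ∧
    upsilon X x = upsilon Y y := by
  have h : BiLipschitzInvOn f g X Y ⟨L, hL.le⟩ := .of_bijOn hbij hg hfLip hfinvLip
  subst hfx
  exact ⟨fun α _ γ hγ ↦ h.isFastLoop_comp_iff hL hx hγ, h.upsilon_eq hL hx⟩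

/-- Proposition on invariance: for a bi-Lipschitz homeomorphism
`f : (X,x) → (Y,y)` (Lipschitz in both directions for the Euclidean metrics, as follows
from an inner-metric bi-Lipschitz map via the pancake decomposition), a loop `γ` is
`α`-fast in `X` iff `f ∘ γ` is `α`-fast in `Y`; consequently `υ(X,x) = υ(Y,y)`. -/
theorem upsilon_biLipschitz_invariant {n m : ℕ}
    (X : Set (EuclideanSpace ℝ (Fin n))) (Y : Set (EuclideanSpace ℝ (Fin m)))
    (f : EuclideanSpace ℝ (Fin n) → EuclideanSpace ℝ (Fin m))
    (hbij : Set.BijOn f X Y) (hfc : ContinuousOn f X)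
    (g : EuclideanSpace ℝ (Fin m) → EuclideanSpace ℝ (Fin n))
    (hg : Set.InvOn g f X Y) (hgc : ContinuousOn g Y)
    (L : ℝ) (hL : 0 < L)
    (hfLip : ∀ a ∈ X, ∀ b ∈ X, dist (f a) (f b) ≤ L * dist a b)
    (hfinvLip : ∀ a ∈ X, ∀ b ∈ X, dist a b ≤ L * dist (f a) (f b))
    (x : EuclideanSpace ℝ (Fin n)) (y : EuclideanSpace ℝ (Fin m))
    (hx : x ∈ X) (hfx : f x = y) :
    (∀ α > (0:ℝ), ∀ γ, IsLoopIn X x γ →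
      (IsFastLoop X x α γ ↔ IsFastLoop Y y α (f ∘ γ))) ∧
    upsilon X x = upsilon Y y :=
  upsilon_biLipschitz_invariant_general X Y f hbij g hg L hL hfLip hfinvLip x y hx hfx
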